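/- For every w ∈ W_G one has ⟨w·δ_G, δ_K⟩ ≤ ⟨δ_G, δ_K⟩ − Σ_{θ∈Λ} ⟨θ, δ_K⟩ (with the convention that the sum is 0 when Λ is empty). -/

import Mathlib

/-!
The Weyl group permutes `Φ`, so `w Φ_G⁺` is again a choice of one root out of each pair `±β`.
Splitting `w Φ_G⁺ = (Φ_G⁺ ∩ w Φ_G⁺) ∪ -(Φ_G⁺ \ w Φ_G⁺)` gives
`w δ_G = δ_G - ∑_{θ ∈ Φ_G⁺ \ w Φ_G⁺} θ`. Pairing with `δ_K`, the subtracted sum runs over a subset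
of `Φ_G⁺`, so it is at least the sum of all the negative terms `⟨θ, δ_K⟩`, which is the sum over `Λ`.
-/

open scoped RealInnerProductSpace

/-- The reflection in the hyperplane orthogonal to `α`. -/
noncomputable def rootReflection {V : Type*} [NormedAddCommGroup V] [InnerProductSpace ℝ V]
    [FiniteDimensional ℝ V] (α : V) : V ≃ₗᵢ[ℝ] V :=
  Submodule.reflection ((ℝ ∙ α)ᗮ)

/-- The Weyl group: the group generated by the reflections in the roots. -/
noncomputable def weylGroup {V : Type*} [NormedAddCommGroup V] [InnerProductSpace ℝ V]
    [FiniteDimensional ℝ V] (Φ : Finset V) : Subgroup (V ≃ₗᵢ[ℝ] V) :=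
  Subgroup.closure { w | ∃ α ∈ Φ, w = rootReflection α }

open Finset

def IsHalf {V : Type*} [AddCommGroup V] (Φ P : Finset V) : Prop :=
  P ⊆ Φ ∧ ∀ β ∈ Φ, β ∈ P ↔ -β ∉ P

namespace IsHalf

variable {V : Type*} [AddCommGroup V] {Φ P Q : Finset V}

theorem of_pos {R F : Type*} [AddCommGroup R] [LinearOrder R] [IsOrderedAddMonoid R]
    [FunLike F V R] [AddMonoidHomClass F V R] (f : F) (hneg : ∀ β ∈ Φ, -β ∈ Φ)
    (hf : ∀ β ∈ Φ, f β ≠ 0) (hP : ∀ β, β ∈ P ↔ β ∈ Φ ∧ 0 < f β) : IsHalf Φ P := by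
  refine ⟨fun β hβ => ((hP β).1 hβ).1, fun β hβ => ?_⟩
  simp only [hP, map_neg, Left.neg_pos_iff, hneg β hβ, hβ, true_and, not_lt]
  exact ⟨le_of_lt, fun h => lt_of_le_of_ne h (hf β hβ).symm⟩

theorem image [DecidableEq V] (hP : IsHalf Φ P) (e : V ≃+ V) (he : ∀ β, e β ∈ Φ ↔ β ∈ Φ) :
    IsHalf Φ (P.image e) := by
  have hmem : ∀ β, β ∈ P.image e ↔ e.symm β ∈ P := fun β =>
    ⟨fun h => by obtain ⟨α, hα, rfl⟩ := mem_image.1 h; simpa using hα,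
      fun h => mem_image.2 ⟨_, h, e.apply_symm_apply β⟩⟩
  refine ⟨fun β hβ => ?_, fun β hβ => ?_⟩
  · obtain ⟨α, hα, rfl⟩ := mem_image.1 hβ
    exact (he α).2 (hP.1 hα)
  · rw [hmem, hmem, map_neg]
    exact hP.2 _ ((he _).1 (by simpa using hβ))

theorem sum_eq_sub_two_nsmul_sum_sdiff [DecidableEq V] (hP : IsHalf Φ P) (hQ : IsHalf Φ Q) :
    ∑ β ∈ Q, β = ∑ β ∈ P, β - 2 • ∑ β ∈ P \ Q, β := by
  have hsplit : Q = P ∩ Q ∪ (P \ Q).map (Equiv.neg V).toEmbedding := by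
    ext β
    simp only [mem_union, mem_inter, mem_map_equiv, mem_sdiff, Equiv.neg_symm, Equiv.neg_apply]
    constructor
    · intro hβ
      by_cases hβP : β ∈ P
      · exact Or.inl ⟨hβP, hβ⟩
      · exact Or.inr ⟨by simpa using mt (hP.2 β (hQ.1 hβ)).2 hβP,
          by simpa using (hQ.2 β (hQ.1 hβ)).1 hβ⟩
    · rintro (⟨-, hβ⟩ | ⟨hβP, hβQ⟩)
      · exact hβ
      · simpa using mt (hQ.2 (-β) (hP.1 hβP)).2 hβQ
  have hdisj : Disjoint (P ∩ Q) ((P \ Q).map (Equiv.neg V).toEmbedding) := by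
    refine disjoint_left.2 fun β hβ hβ' => ?_
    simp only [mem_inter, mem_map_equiv, mem_sdiff, Equiv.neg_symm, Equiv.neg_apply] at hβ hβ'
    exact (hP.2 β (hP.1 hβ.1)).1 hβ.1 hβ'.1
  have hPsum := sum_inter_add_sum_sdiff P Q fun β => β
  rw [← hPsum]
  conv_lhs => rw [hsplit, sum_union hdisj, sum_map]
  simp only [Equiv.coe_toEmbedding, Equiv.neg_apply]
  rw [sum_neg_distrib]
  abel

theorem map_inv_two_smul_sum [Module ℝ V] [DecidableEq V] (hP : IsHalf Φ P) (e : V ≃ₗ[ℝ] V)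
    (he : ∀ β, e β ∈ Φ ↔ β ∈ Φ) :
    e ((2⁻¹ : ℝ) • ∑ β ∈ P, β) = (2⁻¹ : ℝ) • ∑ β ∈ P, β - ∑ β ∈ P \ P.image e, β := by
  have hsum : ∑ β ∈ P.image e, β = ∑ β ∈ P, e β := sum_image fun _ _ _ _ h => e.injective h
  have hsplit : ∑ β ∈ P.image e, β = ∑ β ∈ P, β - 2 • ∑ β ∈ P \ P.image e, β :=
    hP.sum_eq_sub_two_nsmul_sum_sdiff (hP.image e.toAddEquiv he)
  rw [map_smul, map_sum, ← hsum, hsplit, smul_sub, two_nsmul, smul_add, ← add_smul]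
  norm_num

end IsHalf

theorem Finset.sum_filter_neg_le_sum_of_subset {ι M : Type*} [AddCommMonoid M] [LinearOrder M]
    [IsOrderedAddMonoid M] {s t : Finset ι} (g : ι → M)
    (hst : s ⊆ t) : ∑ i ∈ t with g i < 0, g i ≤ ∑ i ∈ s, g i :=
  calc ∑ i ∈ t with g i < 0, g i
      ≤ ∑ i ∈ s with g i < 0, g i :=
        sum_le_sum_of_subset_of_nonpos' (filter_subset_filter _ hst)
          fun _ hi _ => (mem_filter.1 hi).2.le
    _ ≤ ∑ i ∈ s, g i :=
        sum_le_sum_of_subset_of_nonneg (filter_subset _ _)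
          fun _ hi hi' => not_lt.1 fun h => hi' (mem_filter.2 ⟨hi, h⟩)

section WeylGroup

variable {V : Type*} [NormedAddCommGroup V] [InnerProductSpace ℝ V] [FiniteDimensional ℝ V]
  {Φ : Finset V}

theorem rootReflection_self (α : V) : rootReflection α α = -α :=
  Submodule.reflection_orthogonalComplement_singleton_eq_neg α

theorem rootReflection_apply_mem_iff (hrefl : ∀ α ∈ Φ, ∀ β ∈ Φ, rootReflection α β ∈ Φ)
    {α : V} (hα : α ∈ Φ) (β : V) : rootReflection α β ∈ Φ ↔ β ∈ Φ := by
  refine ⟨fun h => ?_, hrefl α hα β⟩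
  simpa [rootReflection] using hrefl α hα _ h

theorem apply_mem_iff_of_mem_weylGroup (hrefl : ∀ α ∈ Φ, ∀ β ∈ Φ, rootReflection α β ∈ Φ)
    {w : V ≃ₗᵢ[ℝ] V} (hw : w ∈ weylGroup Φ) (β : V) : w β ∈ Φ ↔ β ∈ Φ := by
  induction hw using Subgroup.closure_induction generalizing β with
  | mem x hx =>
    obtain ⟨α, hα, rfl⟩ := hx
    exact rootReflection_apply_mem_iff hrefl hα β
  | one => rfl
  | mul x y _ _ ihx ihy => exact (ihx (y β)).trans (ihy β)
  | inv x _ ih => simpa using (ih (x⁻¹ β)).symm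

end WeylGroup

theorem stmt4_general {V : Type*} [NormedAddCommGroup V] [InnerProductSpace ℝ V] [FiniteDimensional ℝ V]
    (Φ : Finset V)
    (hrefl : ∀ α ∈ Φ, ∀ β ∈ Φ, rootReflection α β ∈ Φ)
    (ΦGp : Finset V)
    (hΦGp : ∃ f : V →ₗ[ℝ] ℝ, (∀ α ∈ Φ, f α ≠ 0) ∧ ∀ α, α ∈ ΦGp ↔ α ∈ Φ ∧ 0 < f α)
    (δG : V) (hδG : δG = (2⁻¹ : ℝ) • ∑ α ∈ ΦGp, α)
    (δK : V)
    (Λ : Finset V) (hΛ : ∀ θ, θ ∈ Λ ↔ θ ∈ ΦGp ∧ ⟪θ, δK⟫ < 0) :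
    ∀ w ∈ weylGroup Φ, ⟪w δG, δK⟫ ≤ ⟪δG, δK⟫ - ∑ θ ∈ Λ, ⟪θ, δK⟫ := by
  classical
  intro w hw
  obtain ⟨f, hf0, hfΦ⟩ := hΦGp
  have hneg : ∀ α ∈ Φ, -α ∈ Φ := fun α hα => rootReflection_self α ▸ hrefl α hα α hα
  have hhalf : IsHalf Φ ΦGp := IsHalf.of_pos f hneg hf0 hfΦ
  have hwδG : w δG = δG - ∑ θ ∈ ΦGp \ ΦGp.image (w : V → V), θ := by
    subst hδG
    exact hhalf.map_inv_two_smul_sum w.toLinearEquiv (apply_mem_iff_of_mem_weylGroup hrefl hw)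
  have hΛfilter : Λ = {θ ∈ ΦGp | ⟪θ, δK⟫ < 0} := by
    ext θ
    rw [hΛ, mem_filter]
  rw [hwδG, inner_sub_left, sum_inner, hΛfilter]
  exact sub_le_sub_left (sum_filter_neg_le_sum_of_subset (⟪·, δK⟫) sdiff_subset) _

theorem stmt4 {V : Type*} [NormedAddCommGroup V] [InnerProductSpace ℝ V] [FiniteDimensional ℝ V]
    (Φ : Finset V) (hΦ0 : (0 : V) ∉ Φ)
    (hspan : Submodule.span ℝ (Φ : Set V) = ⊤)
    (hred : ∀ α ∈ Φ, ∀ t : ℝ, t • α ∈ Φ → t = 1 ∨ t = -1)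
    (hrefl : ∀ α ∈ Φ, ∀ β ∈ Φ, rootReflection α β ∈ Φ)
    (ΦGp : Finset V)
    (hΦGp : ∃ f : V →ₗ[ℝ] ℝ, (∀ α ∈ Φ, f α ≠ 0) ∧ ∀ α, α ∈ ΦGp ↔ α ∈ Φ ∧ 0 < f α)
    (δG : V) (hδG : δG = (2⁻¹ : ℝ) • ∑ α ∈ ΦGp, α)
    (ΦK : Finset V) (hΦKsub : ΦK ⊆ Φ)
    (hΦKneg : ∀ α ∈ ΦK, -α ∈ ΦK)
    (hΦKrefl : ∀ α ∈ ΦK, ∀ β ∈ ΦK, rootReflection α β ∈ ΦK)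
    (ΦKp : Finset V) (hΦKp : ∀ α, α ∈ ΦKp ↔ α ∈ ΦK ∧ α ∈ ΦGp)
    (δK : V) (hδK : δK = (2⁻¹ : ℝ) • ∑ α ∈ ΦKp, α)
    (Λ : Finset V) (hΛ : ∀ θ, θ ∈ Λ ↔ θ ∈ ΦGp ∧ ⟪θ, δK⟫ < 0) :
    ∀ w ∈ weylGroup Φ, ⟪w δG, δK⟫ ≤ ⟪δG, δK⟫ - ∑ θ ∈ Λ, ⟪θ, δK⟫ :=
  stmt4_general Φ hrefl ΦGp hΦGp δG hδG δK Λ hΛ
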